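/- Interleaving equivalence does not preserve validity: in the payment model with two distinct addresses A and B, taking γ = [pay(A,B,1), pay(B,A,1)] and γ' = [pay(B,A,1), pay(A,B,1)] (which are interleaving equivalent with respect to the sender address), and the state s with s(A) = 1 and s(B) = 0, we have γ↓s but not γ'↓s. -/
import Mathlib


/-- Semantics of a sequence of claims: process claims left to right,
undefined (`none`) as soon as one claim is undefined. -/
def run {State Claim : Type*} (sem : Claim → State → Option State) :
    List Claim → State → Option State
  | [], s => some s
  | c :: γ, s => (sem c s).bind (run sem γ)

/-- A claim sequence is valid (defined) in a state. -/
def Defined {State Claim : Type*} (sem : Claim → State → Option State)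
    (γ : List Claim) (s : State) : Prop :=
  run sem γ s ≠ none

/-- Weak independence of claims: whenever both are valid in a state, both
processing orders are valid and yield the same result. -/
def WeakIndep {State Claim : Type*} (sem : Claim → State → Option State)
    (c c' : Claim) : Prop :=
  ∀ s : State, sem c s ≠ none → sem c' s ≠ none →
    Defined sem [c, c'] s ∧ Defined sem [c', c] s ∧
      run sem [c, c'] s = run sem [c', c] s

/-- A payment claim: `sender` pays `amount` to `recipient`. -/
structure Pay (Address : Type*) where
  sender : Address
  recipient : Address
  amount : ℕ

/-- Semantics of a payment claim: valid iff the amount is positive and the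
sender has a sufficient balance; the effect first subtracts the amount from
the sender's balance and then adds it to the recipient's balance. -/
def paySem {Address : Type*} [DecidableEq Address] (c : Pay Address)
    (s : Address → ℕ) : Option (Address → ℕ) :=
  if 0 < c.amount ∧ c.amount ≤ s c.sender then
    let s' := Function.update s c.sender (s c.sender - c.amount)
    some (Function.update s' c.recipient (s' c.recipient + c.amount))
  else none

/-- The reduct of a payment sequence by a sender address. -/
def reduct {Address : Type*} [DecidableEq Address]
    (γ : List (Pay Address)) (a : Address) : List (Pay Address) :=
  γ.filter (fun c => decide (c.sender = a))

/-- Interleaving equivalence (with respect to sender addresses). -/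
def InterEquiv {Address : Type*} [DecidableEq Address]
    (γ γ' : List (Pay Address)) : Prop :=
  ∀ a : Address, reduct γ a = reduct γ' a

theorem interEquiv_not_validity_preserving {Address : Type*} [DecidableEq Address]
    (A B : Address) (hAB : A ≠ B) (s : Address → ℕ) (hA : s A = 1) (hB : s B = 0) :
    InterEquiv [Pay.mk A B 1, Pay.mk B A 1] [Pay.mk B A 1, Pay.mk A B 1] ∧
    Defined paySem [Pay.mk A B 1, Pay.mk B A 1] s ∧
    ¬ Defined paySem [Pay.mk B A 1, Pay.mk A B 1] s := by
  refine ⟨?_, ?_, ?_⟩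
  · intro a
    simp only [reduct, List.filter]
    by_cases h1 : A = a <;> by_cases h2 : B = a <;> simp_all
  · simp only [Defined, run, paySem, hA, hAB]
    norm_num
    simp
  · simp only [Defined, run, paySem, hB]
    norm_num
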